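/- arXiv:1602.08380 — 3 statements merged into one kernel-verified Lean document; each statement's English description precedes it below -/
import Mathlib

section
/- Let (X, f_{1,∞}) be a nonautonomous discrete dynamical system, let p be a free ultrafilter on ℕ, and let k ∈ ℕ with k ≥ 2. Then f_1^p = f_k^{p−k} ∘ f_1^{k−1}, where p−k is the unique free ultrafilter on ℕ whose pushforward under m ↦ m+k equals p; that is, for every x ∈ X, f_1^p(x) = (p−k)-lim_i (f_{k+i} ∘ ⋯ ∘ f_k)(f_1^{k−1}(x)). -/
open Filter Topology

/-- The `n`-th iterate `f_1^n = f_n ∘ ⋯ ∘ f_1` of a nonautonomous system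
(maps are indexed from `1`; `f 0` is unused). `iterSeq f 0` is the identity. -/
def iterSeq {X : Type*} (f : ℕ → X → X) : ℕ → X → X
  | 0 => id
  | n + 1 => f (n + 1) ∘ iterSeq f n

/-- `compFrom f k i = f_{k+i} ∘ ⋯ ∘ f_k`. -/
def compFrom {X : Type*} (f : ℕ → X → X) (k : ℕ) : ℕ → X → X
  | 0 => f k
  | i + 1 => f (k + i + 1) ∘ compFrom f k i

/-- The `p`-limit of a sequence `u` in a topological space with respect to an ultrafilter `p`
on `ℕ`. -/
noncomputable def pLim {X : Type*} [TopologicalSpace X] (p : Ultrafilter ℕ) (u : ℕ → X) : X :=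
  letI : Nonempty X := ⟨u 0⟩
  limUnder (p : Filter ℕ) u

/-- `f_1^p(x) = p-lim_n f_1^n(x)`. -/
noncomputable def pIter {X : Type*} [TopologicalSpace X] (f : ℕ → X → X)
    (p : Ultrafilter ℕ) : X → X :=
  fun x => pLim p fun n => iterSeq f n x

/-- `f_1^p = f_k^{p−k} ∘ f_1^{k−1}` for `k ≥ 2`, where `p−k` is the unique free ultrafilter
whose pushforward under `m ↦ m + k` equals `p`; that is, for every `x ∈ X`,
`f_1^p(x) = (p−k)-lim_i (f_{k+i} ∘ ⋯ ∘ f_k)(f_1^{k−1}(x))`. -/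
theorem stmt2 {X : Type*} [MetricSpace X] [CompactSpace X]
    (f : ℕ → X → X) (hf : ∀ n, 1 ≤ n → Continuous (f n))
    (p : Ultrafilter ℕ) (hp : (p : Filter ℕ) ≤ Filter.cofinite)
    (k : ℕ) (hk : 2 ≤ k)
    (pk : Ultrafilter ℕ) (hpk : (pk : Filter ℕ) ≤ Filter.cofinite)
    (hmap : pk.map (· + k) = p) :
    ∀ x : X, pIter f p x = pLim pk (fun i => compFrom f k i (iterSeq f (k - 1) x)) := by
  intro x
  have hk1 : 1 ≤ k := le_trans (by norm_num) hk
  have key : ∀ i, compFrom f k i (iterSeq f (k - 1) x) = iterSeq f (i + k) x := by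
    intro i
    induction i with
    | zero =>
      have : k - 1 + 1 = k := Nat.succ_pred_eq_of_pos hk1
      simp only [compFrom, Nat.zero_add]
      conv_rhs => rw [← this]
      simp [iterSeq, this]
    | succ n ih =>
      have h1 : n + 1 + k = (n + k) + 1 := by ring
      simp only [compFrom, Function.comp_apply, ih, h1, iterSeq, Function.comp_apply]
      congr 1
      omega
  simp only [key]
  show pLim p (fun n => iterSeq f n x) = pLim pk (fun i => iterSeq f (i + k) x)
  unfold pLim limUnder
  congr 1
  rw [← hmap, Ultrafilter.coe_map, Filter.map_map]
  rfl
end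

section
/- Let (X, f_{1,∞}) be a periodic nonautonomous discrete dynamical system of period k > 1, i.e. f_{n+k} = f_n for all n ≥ 1. Let 0 ≤ j < k and let p be a free ultrafilter on ℕ containing C_j := {n ∈ ℕ : n ≡ j (mod k)}. Then, with q the free ultrafilter on ℕ whose pushforward under l ↦ kl + j equals p, one has f_1^p = (f_j ∘ ⋯ ∘ f_2 ∘ f_1) ∘ g^q, where g := f_k ∘ ⋯ ∘ f_2 ∘ f_1; in particular f_1^p belongs to (f_j ∘ ⋯ ∘ f_1) ∘ E(X, g). -/
open Filter Topology

/-- `g^q(x) = q-lim_n g^n(x)` for a single map `g : X → X`. -/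
noncomputable def pIterMap {X : Type*} [TopologicalSpace X] (g : X → X)
    (q : Ultrafilter ℕ) : X → X :=
  fun x => pLim q fun n => g^[n] x


lemma tendsto_pLim {X : Type*} [TopologicalSpace X] [CompactSpace X]
    (q : Ultrafilter ℕ) (u : ℕ → X) : Tendsto u q (𝓝 (pLim q u)) := by
  unfold pLim
  letI : Nonempty X := ⟨u 0⟩
  obtain ⟨x, -, hx⟩ := isCompact_univ.ultrafilter_le_nhds (q.map u) (by simp)
  exact tendsto_nhds_limUnder ⟨x, hx⟩

lemma pLim_eq {X : Type*} [TopologicalSpace X] [T2Space X] [CompactSpace X]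
    (q : Ultrafilter ℕ) {u : ℕ → X} {x : X} (h : Tendsto u q (𝓝 x)) : pLim q u = x :=
  tendsto_nhds_unique (tendsto_pLim q u) h

/-- Let `(X, f_{1,∞})` be a periodic nonautonomous system of period `k > 1`, i.e.
`f_{n+k} = f_n` for all `n ≥ 1`.  Let `0 ≤ j < k` and let `p` be a free ultrafilter
containing `C_j = {n : n ≡ j (mod k)}`.  Then, with `q` the free ultrafilter whose
pushforward under `l ↦ k·l + j` equals `p`, one has `f_1^p = (f_j ∘ ⋯ ∘ f_1) ∘ g^q`
where `g = f_k ∘ ⋯ ∘ f_1`; in particular `f_1^p ∈ (f_j ∘ ⋯ ∘ f_1) ∘ E(X, g)`. -/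
theorem stmt4 {X : Type*} [MetricSpace X] [CompactSpace X]
    (f : ℕ → X → X) (hf : ∀ n, 1 ≤ n → Continuous (f n))
    (k : ℕ) (hk : 1 < k) (hper : ∀ n, 1 ≤ n → f (n + k) = f n)
    (j : ℕ) (hj : j < k)
    (p : Ultrafilter ℕ) (hp : (p : Filter ℕ) ≤ Filter.cofinite)
    (hC : {n : ℕ | n % k = j} ∈ p)
    (q : Ultrafilter ℕ) (hq : (q : Filter ℕ) ≤ Filter.cofinite)
    (hmap : q.map (fun l => k * l + j) = p) :
    pIter f p = iterSeq f j ∘ pIterMap (iterSeq f k) q ∧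
    pIter f p ∈ (fun h : X → X => iterSeq f j ∘ h) ''
      closure {h : X → X | ∃ n : ℕ, h = (iterSeq f k)^[n]} := by
  set g := iterSeq f k with hg
  -- extended periodicity
  have hper' : ∀ n, 1 ≤ n → ∀ l, f (n + l * k) = f n := by
    intro n hn l
    induction l with
    | zero => simp
    | succ l ih =>
      rw [show n + (l + 1) * k = (n + l * k) + k by ring, hper (n + l * k) (by omega), ih]
  -- splitting the iterate
  have hsplit : ∀ l i, iterSeq f (k * l + i) = iterSeq f i ∘ iterSeq f (k * l) := by
    intro l i
    induction i with
    | zero => simp [iterSeq]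
    | succ i ih =>
      have h1 : iterSeq f (k * l + (i + 1)) = f (k * l + i + 1) ∘ iterSeq f (k * l + i) := rfl
      have h2 : f (k * l + i + 1) = f (i + 1) := by
        rw [show k * l + i + 1 = (i + 1) + l * k by ring]
        exact hper' (i + 1) (by omega) l
      rw [h1, h2, ih]
      rfl
  have hpow : ∀ l, iterSeq f (k * l) = g^[l] := by
    intro l
    induction l with
    | zero => simp [iterSeq]
    | succ l ih =>
      rw [show k * (l + 1) = k * l + k by ring, hsplit l k, ih, ← hg,
        Function.iterate_succ']
  -- continuity of the iterates
  have hcont : ∀ i, Continuous (iterSeq f i) := by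
    intro i
    induction i with
    | zero => exact continuous_id
    | succ i ih => exact (hf (i + 1) (by omega)).comp ih
  -- the main identity
  have hmain : pIter f p = iterSeq f j ∘ pIterMap g q := by
    funext x
    have hy : Tendsto (fun l => g^[l] x) (q : Filter ℕ) (𝓝 (pIterMap g q x)) :=
      tendsto_pLim q _
    have h1 : Tendsto (fun l => iterSeq f (k * l + j) x) (q : Filter ℕ)
        (𝓝 (iterSeq f j (pIterMap g q x))) := by
      have := ((hcont j).tendsto _).comp hy
      refine this.congr fun l => ?_
      rw [hsplit l j, hpow l]
      rfl
    have h2 : Tendsto (fun n => iterSeq f n x) (p : Filter ℕ)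
        (𝓝 (iterSeq f j (pIterMap g q x))) := by
      rw [← hmap]
      rw [Ultrafilter.coe_map, Filter.tendsto_map'_iff]
      exact h1.congr fun l => by simp [Function.comp]
    exact pLim_eq p h2
  refine ⟨hmain, ⟨pIterMap g q, ?_, hmain.symm⟩⟩
  have ht : Tendsto (fun n => g^[n]) (q : Filter ℕ) (𝓝 (pIterMap g q)) := by
    rw [tendsto_pi_nhds]
    intro x
    exact tendsto_pLim q _
  exact mem_closure_of_tendsto ht (Filter.Eventually.of_forall fun n => ⟨n, rfl⟩)
end

section
/- Let (X, f_{1,∞}) be a nonautonomous discrete dynamical system such that the sequence (f_n)_{n∈ℕ} converges uniformly to a function φ : X → X. Then φ ∘ f_1^p = f_1^{p+1} for every free ultrafilter p on ℕ, where p + 1 denotes the pushforward of p under m ↦ m + 1. -/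
open Filter Topology

/-!
Along `p` the orbit `f_1^n(x)` tends to `y = f_1^p(x)`. Since `p` is free, `f_{n+1} → φ`
uniformly along `p`, and `φ` is continuous, so `f_1^{n+1}(x) = f_{n+1}(f_1^n(x))` tends to
`φ y` along `p`.
The `(p + 1)`-limit of the orbit is its `p`-limit after the shift `n ↦ n + 1`, so it is `φ y`.
-/

section PLim

variable {X : Type*} [TopologicalSpace X] [T2Space X]

theorem pLim_eq_of_tendsto {p : Ultrafilter ℕ} {u : ℕ → X} {x : X}
    (h : Tendsto u (p : Filter ℕ) (𝓝 x)) : pLim p u = x :=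
  h.limUnder_eq

variable [CompactSpace X]

theorem tendsto_pLim_s10 (p : Ultrafilter ℕ) (u : ℕ → X) :
    Tendsto u (p : Filter ℕ) (𝓝 (pLim p u)) := by
  obtain ⟨x, -, hx⟩ := isCompact_univ.ultrafilter_le_nhds (p.map u) (by simp)
  have hu : Tendsto u (p : Filter ℕ) (𝓝 x) := hx
  rwa [pLim_eq_of_tendsto hu]

theorem pLim_map (p : Ultrafilter ℕ) (g : ℕ → ℕ) (u : ℕ → X) :
    pLim (p.map g) u = pLim p (u ∘ g) := by
  refine pLim_eq_of_tendsto ?_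
  rw [Ultrafilter.coe_map, tendsto_map'_iff]
  exact tendsto_pLim_s10 p (u ∘ g)

end PLim

/-- If `(f_n)` converges uniformly to `φ : X → X`, then `φ ∘ f_1^p = f_1^{p+1}` for every
free ultrafilter `p` on `ℕ`, where `p + 1` is the pushforward of `p` under `m ↦ m + 1`. -/
theorem stmt10 {X : Type*} [MetricSpace X] [CompactSpace X]
    (f : ℕ → X → X) (hf : ∀ n, 1 ≤ n → Continuous (f n))
    (φ : X → X) (hconv : TendstoUniformly (fun n x => f n x) φ Filter.atTop)
    (p : Ultrafilter ℕ) (hp : (p : Filter ℕ) ≤ Filter.cofinite) :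
    φ ∘ pIter f p = pIter f (p.map (· + 1)) := by
  funext x
  have hφ : Continuous φ :=
    hconv.continuous (eventually_atTop.2 ⟨1, fun n hn => hf n hn⟩).frequently
  have hp_atTop : (p : Filter ℕ) ≤ atTop := Nat.cofinite_eq_atTop ▸ hp
  have hshift : TendstoUniformly (fun n => f (n + 1)) φ (p : Filter ℕ) :=
    fun U hU => hp_atTop ((tendsto_add_atTop_nat 1).eventually (hconv U hU))
  have horbit : Tendsto (fun n => f (n + 1) (iterSeq f n x)) (p : Filter ℕ)
      (𝓝 (φ (pIter f p x))) :=
    hshift.tendsto_comp hφ.continuousAt (tendsto_pLim_s10 p _)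
  calc φ (pIter f p x) = pLim p (fun n => f (n + 1) (iterSeq f n x)) :=
        (pLim_eq_of_tendsto horbit).symm
    _ = pIter f (p.map (· + 1)) x := (pLim_map p (· + 1) fun n => iterSeq f n x).symm
end
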